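/- arXiv:2001.08663 — 5 statements merged into one kernel-verified Lean document; each statement's English description precedes it below -/
import Mathlib

section
/- For any continuous control function n : [0,L] → ℂ and any initial condition q(0) = x ∈ ℂ, the ordinary differential equation q'(z) = iγ|q(z)|²q(z) + n(z) on [0,L] has a unique solution with continuously differentiable real and imaginary parts. -/
/-!
The Kerr term `iγ|q|²q` is orthogonal to `q`, so along a solution `(|q|²)' = 2⟪q, n⟫ ≤ |q|² + C²`
with `C` a bound for `|n|`, and Grönwall's inequality bounds `|q|` on `[0, L]` by a radius `R`
depending only on `|x|`, `C` and `L`. Evaluating the Kerr term at the radial retraction of `q`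
onto the closed `R`-ball gives a bounded, globally Lipschitz field with the same orthogonality,
so Picard–Lindelöf produces a global solution of the truncated equation; by the bound it stays
in the ball, where the truncation is inactive. Uniqueness holds because the cubic nonlinearity
is Lipschitz on bounded sets and solutions are continuous, hence bounded, on `[0, L]`.
-/

/-- The per-sample channel ODE: `q' = iγ|q|²q + n` on `[0, L]`. -/
def IsSol (γ L : ℝ) (n q : ℝ → ℂ) : Prop :=
  ∀ z ∈ Set.Icc (0:ℝ) L,
    HasDerivAt q (Complex.I * (γ:ℂ) * ((‖q z‖:ℂ))^2 * q z + n z) z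

open Set Metric
open scoped NNReal RealInnerProductSpace

section InnerProductSpace

variable {F : Type*} [NormedAddCommGroup F] [InnerProductSpace ℝ F]

theorem lipschitzWith_one_of_inner_sub_nonpos {P : F → F} {K : Set F} (hPK : ∀ a, P a ∈ K)
    (hP : ∀ a, ∀ y ∈ K, ⟪a - P a, y - P a⟫ ≤ 0) : LipschitzWith 1 P := by
  refine LipschitzWith.of_dist_le_mul fun a b => ?_
  rw [NNReal.coe_one, one_mul, dist_eq_norm, dist_eq_norm]
  have hsq : ‖P a - P b‖ ^ 2 ≤ ⟪a - b, P a - P b⟫ := by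
    have h₁ := hP a (P b) (hPK b)
    have h₂ := hP b (P a) (hPK a)
    have : ⟪a - b, P a - P b⟫ - ‖P a - P b‖ ^ 2
        = -⟪a - P a, P b - P a⟫ - ⟪b - P b, P a - P b⟫ := by
      rw [← real_inner_self_eq_norm_sq]
      simp only [inner_sub_left, inner_sub_right, real_inner_comm]
      ring
    linarith
  have := hsq.trans (real_inner_le_norm _ _)
  nlinarith [norm_nonneg (P a - P b), norm_nonneg (a - b)]

theorem norm_sq_le_gronwallBound_of_inner_deriv_le {f f' : ℝ → F} {a b C : ℝ}
    (hf : ContinuousOn f (Icc a b))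
    (hf' : ∀ t ∈ Ico a b, HasDerivWithinAt f (f' t) (Ici t) t)
    (bound : ∀ t ∈ Ico a b, ⟪f t, f' t⟫ ≤ C * ‖f t‖) :
    ∀ t ∈ Icc a b, ‖f t‖ ^ 2 ≤ gronwallBound (‖f a‖ ^ 2) 1 (C ^ 2) (t - a) := by
  refine le_gronwallBound_of_liminf_deriv_right_le (f' := fun t => 2 * ⟪f t, f' t⟫)
    (continuous_pow 2 |>.comp_continuousOn (continuous_norm.comp_continuousOn hf))
    (fun t ht r hr => ((hf' t ht).norm_sq).liminf_right_slope_le hr) le_rfl fun t ht => ?_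
  have := bound t ht
  nlinarith [sq_nonneg (‖f t‖ - C)]

-- At `w = 0` the junk value `R / 0 = 0` is harmless: the result is `0` either way.
noncomputable def radialRetraction (R : ℝ≥0) (w : F) : F := min 1 (R / ‖w‖) • w

variable {R : ℝ≥0}

theorem radialRetraction_of_norm_le {w : F} (h : ‖w‖ ≤ R) : radialRetraction R w = w := by
  rcases eq_or_ne w 0 with rfl | hw
  · simp [radialRetraction]
  · rw [radialRetraction, min_eq_left ((one_le_div (norm_pos_iff.2 hw)).2 h), one_smul]

theorem norm_radialRetraction_le (w : F) : ‖radialRetraction R w‖ ≤ R := by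
  rcases eq_or_ne w 0 with rfl | hw
  · simp [radialRetraction]
  · have hw' := norm_pos_iff.2 hw
    rw [radialRetraction, norm_smul, Real.norm_of_nonneg (by positivity)]
    calc min 1 (R / ‖w‖) * ‖w‖ ≤ R / ‖w‖ * ‖w‖ := by gcongr; exact min_le_right _ _
      _ = R := div_mul_cancel₀ _ hw'.ne'

theorem inner_sub_radialRetraction_nonpos (w : F) {y : F} (hy : y ∈ closedBall 0 R) :
    ⟪w - radialRetraction R w, y - radialRetraction R w⟫ ≤ 0 := by
  rcases le_or_gt ‖w‖ R with hw | hw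
  · simp [radialRetraction_of_norm_le hw]
  · set s := min 1 (R / ‖w‖)
    have hs : s = R / ‖w‖ := min_eq_right ((div_le_one (R.2.trans_lt hw)).2 hw.le)
    have hs1 : s ≤ 1 := min_le_left _ _
    have hy : ‖y‖ ≤ R := mem_closedBall_zero_iff.1 hy
    have hsw : s * ‖w‖ = R := by rw [hs]; exact div_mul_cancel₀ _ (R.2.trans_lt hw).ne'
    have hwy : ⟪w, y⟫ ≤ s * ‖w‖ ^ 2 := by
      calc ⟪w, y⟫ ≤ ‖w‖ * ‖y‖ := real_inner_le_norm _ _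
        _ ≤ ‖w‖ * R := by gcongr
        _ = s * ‖w‖ ^ 2 := by rw [← hsw]; ring
    have : w - radialRetraction R w = (1 - s) • w := by rw [radialRetraction, sub_smul, one_smul]
    rw [this, radialRetraction, inner_smul_left, inner_sub_right, inner_smul_right,
      real_inner_self_eq_norm_sq, RCLike.conj_to_real]
    exact mul_nonpos_of_nonneg_of_nonpos (by linarith) (by linarith)

theorem lipschitzWith_radialRetraction : LipschitzWith 1 (radialRetraction (F := F) R) :=
  lipschitzWith_one_of_inner_sub_nonpos
    (fun w => mem_closedBall_zero_iff.2 (norm_radialRetraction_le w))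
    inner_sub_radialRetraction_nonpos

end InnerProductSpace

theorem lipschitzOnWith_norm_sq_smul {E : Type*} [SeminormedAddCommGroup E] [NormedSpace ℝ E]
    (M : ℝ≥0) : LipschitzOnWith (3 * M ^ 2) (fun w : E => ‖w‖ ^ 2 • w) (closedBall 0 M) := by
  refine LipschitzOnWith.of_dist_le_mul fun a ha b hb => ?_
  rw [mem_closedBall_zero_iff] at ha hb
  rw [dist_eq_norm, dist_eq_norm]
  have hab : |‖a‖ - ‖b‖| ≤ ‖a - b‖ := abs_norm_sub_norm_le a b
  calc ‖‖a‖ ^ 2 • a - ‖b‖ ^ 2 • b‖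
      = ‖‖a‖ ^ 2 • (a - b) + ((‖a‖ - ‖b‖) * (‖a‖ + ‖b‖)) • b‖ := by
        rw [smul_sub, show (‖a‖ - ‖b‖) * (‖a‖ + ‖b‖) = ‖a‖ ^ 2 - ‖b‖ ^ 2 by ring, sub_smul]
        abel_nf
    _ ≤ ‖a‖ ^ 2 * ‖a - b‖ + |‖a‖ - ‖b‖| * (‖a‖ + ‖b‖) * ‖b‖ := by
        refine (norm_add_le _ _).trans_eq ?_
        rw [norm_smul, norm_smul, Real.norm_of_nonneg (by positivity), Real.norm_eq_abs, abs_mul,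
          abs_of_nonneg (by positivity : 0 ≤ ‖a‖ + ‖b‖)]
    _ ≤ M ^ 2 * ‖a - b‖ + ‖a - b‖ * (M + M) * M := by gcongr
    _ = (3 * M ^ 2 : ℝ≥0) * ‖a - b‖ := by push_cast; ring

theorem exists_eq_forall_mem_Icc_hasDerivWithinAt_of_lipschitzWith {E : Type*}
    [NormedAddCommGroup E] [NormedSpace ℝ E] [CompleteSpace E] {v : ℝ → E → E} {K : ℝ≥0} {B : ℝ}
    {tmin tmax : ℝ} (t₀ : Icc tmin tmax) (x₀ : E) (hv : ∀ t, LipschitzWith K (v t))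
    (hcont : ∀ x, Continuous (v · x)) (hB : ∀ t x, ‖v t x‖ ≤ B) :
    ∃ α : ℝ → E, α t₀ = x₀ ∧
      ∀ t ∈ Icc tmin tmax, HasDerivWithinAt α (v t (α t)) (Icc tmin tmax) t :=
  IsPicardLindelof.exists_eq_forall_mem_Icc_hasDerivWithinAt₀
    (a := B.toNNReal * (tmax - tmin).toNNReal)
    { lipschitzOnWith := fun t _ => (hv t).lipschitzOnWith
      continuousOn := fun x _ => (hcont x).continuousOn
      norm_le := fun t _ x _ => (hB t x).trans (Real.le_coe_toNNReal B)
      mul_max_le := by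
        have hB₀ : 0 ≤ B := (norm_nonneg _).trans (hB t₀ x₀)
        obtain ⟨h₁, h₂⟩ := t₀.2
        rw [NNReal.coe_zero, sub_zero, NNReal.coe_mul, Real.coe_toNNReal _ hB₀,
          Real.coe_toNNReal _ (by linarith)]
        exact mul_le_mul_of_nonneg_left (max_le (by linarith) (by linarith)) hB₀ }

noncomputable def kerr (γ : ℝ) (w : ℂ) : ℂ := Complex.I * γ * (‖w‖ : ℂ) ^ 2 * w

theorem kerr_eq_smul (γ : ℝ) (w : ℂ) : kerr γ w = (Complex.I * γ) • (‖w‖ ^ 2 • w) := by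
  simp only [kerr, smul_eq_mul, Complex.real_smul]; push_cast; ring

theorem norm_kerr (γ : ℝ) (w : ℂ) : ‖kerr γ w‖ = |γ| * ‖w‖ ^ 3 := by
  simp only [kerr, norm_mul, Complex.norm_I, Complex.norm_real, norm_pow, Real.norm_eq_abs,
    abs_norm]
  ring

theorem lipschitzOnWith_kerr (γ : ℝ) (M : ℝ≥0) :
    LipschitzOnWith (‖Complex.I * γ‖₊ * (3 * M ^ 2)) (kerr γ) (closedBall 0 M) := by
  rw [show kerr γ = _ from funext (kerr_eq_smul γ)]
  exact (lipschitzWith_smul (Complex.I * γ)).comp_lipschitzOnWith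
    (lipschitzOnWith_norm_sq_smul (E := ℂ) M)

theorem inner_kerr_smul_self (γ s : ℝ) (w : ℂ) : ⟪w, kerr γ (s • w)⟫ = 0 := by
  simp only [kerr, Complex.inner, Complex.real_smul, Complex.mul_re, Complex.mul_im,
    Complex.I_re, Complex.I_im, Complex.conj_re, Complex.conj_im, Complex.ofReal_re,
    Complex.ofReal_im, ← Complex.ofReal_pow]
  ring

noncomputable def truncatedKerr (γ : ℝ) (R : ℝ≥0) (w : ℂ) : ℂ := kerr γ (radialRetraction R w)

theorem lipschitzWith_truncatedKerr (γ : ℝ) (R : ℝ≥0) :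
    LipschitzWith (‖Complex.I * γ‖₊ * (3 * R ^ 2)) (truncatedKerr γ R) := by
  change LipschitzWith _ (kerr γ ∘ radialRetraction R)
  simpa only [mul_one, lipschitzOnWith_univ] using
    (lipschitzOnWith_kerr γ R).comp (lipschitzWith_radialRetraction.lipschitzOnWith (s := univ))
      fun w _ => mem_closedBall_zero_iff.2 (norm_radialRetraction_le w)

theorem norm_truncatedKerr_le (γ : ℝ) (R : ℝ≥0) (w : ℂ) :
    ‖truncatedKerr γ R w‖ ≤ |γ| * R ^ 3 := by
  rw [truncatedKerr, norm_kerr]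
  gcongr
  exact norm_radialRetraction_le w

theorem inner_truncatedKerr_self (γ : ℝ) (R : ℝ≥0) (w : ℂ) : ⟪w, truncatedKerr γ R w⟫ = 0 :=
  inner_kerr_smul_self γ _ w

theorem IsSol.eqOn {γ L : ℝ} {n p q : ℝ → ℂ} (hp : IsSol γ L n p) (hq : IsSol γ L n q)
    (h₀ : p 0 = q 0) : EqOn p q (Icc 0 L) := by
  have hpc : ContinuousOn p (Icc 0 L) := fun t ht => (hp t ht).continuousAt.continuousWithinAt
  have hqc : ContinuousOn q (Icc 0 L) := fun t ht => (hq t ht).continuousAt.continuousWithinAt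
  obtain ⟨M, hM⟩ := isCompact_Icc.exists_bound_of_continuousOn (hpc.prodMk hqc)
  have hbound : ∀ t ∈ Ico (0 : ℝ) L, ‖(p t, q t)‖ ≤ M.toNNReal := fun t ht =>
    (hM t (Ico_subset_Icc_self ht)).trans (Real.le_coe_toNNReal M)
  exact ODE_solution_unique_of_mem_Icc_right (v := fun t w => kerr γ w + n t)
    (fun t _ => (lipschitzOnWith_kerr γ M.toNNReal).add (LipschitzWith.const (n t)).lipschitzOnWith)
    hpc (fun t ht => (hp t (Ico_subset_Icc_self ht)).hasDerivWithinAt)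
    (fun t ht => mem_closedBall_zero_iff.2 ((norm_fst_le _).trans (hbound t ht)))
    hqc (fun t ht => (hq t (Ico_subset_Icc_self ht)).hasDerivWithinAt)
    (fun t ht => mem_closedBall_zero_iff.2 ((norm_snd_le _).trans (hbound t ht))) h₀

theorem exists_isSol (γ : ℝ) {L : ℝ} (hL : 0 ≤ L) {n : ℝ → ℂ} (hn : ContinuousOn n (Icc 0 L))
    (x : ℂ) : ∃ q : ℝ → ℂ, q 0 = x ∧ IsSol γ L n q := by
  -- `n` extended constantly to `ℝ`, so that the truncated equation can be solved on the larger
  -- interval `[-1, L + 1]` and its solution is two-sided differentiable at `0` and `L`.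
  set N : ℝ → ℂ := fun t => n (projIcc 0 L hL t)
  have hN : Continuous N := hn.comp_continuous (continuous_subtype_val.comp continuous_projIcc)
    fun t => (projIcc 0 L hL t).2
  obtain ⟨C, hC⟩ := isCompact_Icc.exists_bound_of_continuousOn hn
  have hNC : ∀ t, ‖N t‖ ≤ C := fun t => hC _ (projIcc 0 L hL t).2
  obtain ⟨R, hR⟩ : ∃ R : ℝ≥0, gronwallBound (‖x‖ ^ 2) 1 (C ^ 2) L ≤ R ^ 2 :=
    ⟨NNReal.sqrt (gronwallBound (‖x‖ ^ 2) 1 (C ^ 2) L).toNNReal, by simp⟩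
  obtain ⟨q, hq₀, hq⟩ := exists_eq_forall_mem_Icc_hasDerivWithinAt_of_lipschitzWith
    (v := fun t w => truncatedKerr γ R w + N t) (tmin := -1) (tmax := L + 1)
    ⟨0, by constructor <;> linarith⟩ x
    (fun t => (lipschitzWith_truncatedKerr γ R).add (LipschitzWith.const (N t)))
    (fun w => continuous_const.add hN)
    (fun t w => (norm_add_le _ _).trans (add_le_add (norm_truncatedKerr_le γ R w) (hNC t)))
  have hq' : ∀ t ∈ Icc 0 L, HasDerivAt q (truncatedKerr γ R (q t) + N t) t := fun t ht =>
    (hq t ⟨by linarith [ht.1], by linarith [ht.2]⟩).hasDerivAt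
      (Icc_mem_nhds (by linarith [ht.1]) (by linarith [ht.2]))
  have hqR : ∀ t ∈ Icc 0 L, ‖q t‖ ≤ R := by
    intro t ht
    have hsq := norm_sq_le_gronwallBound_of_inner_deriv_le
      (fun t ht => (hq' t ht).continuousAt.continuousWithinAt)
      (fun t ht => (hq' t (Ico_subset_Icc_self ht)).hasDerivWithinAt)
      (fun t _ => by
        rw [inner_add_right, inner_truncatedKerr_self, zero_add, mul_comm]
        exact (real_inner_le_norm _ _).trans (by gcongr; exact hNC t)) t ht
    rw [sub_zero, hq₀] at hsq
    refine (pow_le_pow_iff_left₀ (norm_nonneg _) R.2 two_ne_zero).1 ?_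
    exact hsq.trans ((gronwallBound_mono (by positivity) (by positivity) zero_le_one ht.2).trans hR)
  have hqn : ∀ t ∈ Icc 0 L, truncatedKerr γ R (q t) + N t = kerr γ (q t) + n t := fun t ht => by
    rw [truncatedKerr, radialRetraction_of_norm_le (hqR t ht)]
    simp only [N, projIcc_of_mem hL ht]
  exact ⟨q, hq₀, fun t ht => hqn t ht ▸ hq' t ht⟩

/-- For any continuous control and any initial condition, the per-sample
channel ODE has a solution on `[0,L]`, unique on `[0,L]`. -/
theorem existence_uniqueness (γ L : ℝ) (hL : 0 < L)
    (n : ℝ → ℂ) (hn : ContinuousOn n (Set.Icc 0 L)) (x : ℂ) :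
    ∃ q : ℝ → ℂ, q 0 = x ∧ IsSol γ L n q ∧
      ∀ p : ℝ → ℂ, p 0 = x → IsSol γ L n p → ∀ z ∈ Set.Icc (0:ℝ) L, p z = q z := by
  obtain ⟨q, hq₀, hq⟩ := exists_isSol γ hL.le hn x
  exact ⟨q, hq₀, hq, fun p hp₀ hp => hp.eqOn hq (hp₀.trans hq₀.symm)⟩
end

section
/- Let q : [0,L] → ℂ solve q'(z) = iγ|q(z)|²q(z) + n(z) with n continuous, q(0) = x and q(L) = y. Then the noise energy satisfies ∫₀^L |n(z)|² dz ≥ (|y| − |x|)² / L. -/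
/-! The nonlinear term `iγ|q|²q` only rotates the phase of `q`. With `θ(z) = γ ∫₀^z |q|²`, the
gauged signal `p = e^{-iθ} q` has `|p| = |q|` and `p' = e^{-iθ} n`, so
`||y| - |x|| ≤ |p(L) - p(0)| ≤ ∫₀^L |n|`, and Cauchy–Schwarz gives `(∫₀^L |n|)² ≤ L ∫₀^L |n|²`. -/

open Set Complex MeasureTheory intervalIntegral

theorem sq_intervalIntegral_le_mul_integral_sq {f : ℝ → ℝ} {a b : ℝ} (hab : a ≤ b)
    (hf : IntervalIntegrable f volume a b)
    (hf2 : IntervalIntegrable (fun x => f x ^ 2) volume a b) :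
    (∫ x in a..b, f x) ^ 2 ≤ (b - a) * ∫ x in a..b, f x ^ 2 := by
  rcases hab.eq_or_lt with rfl | hlt
  · simp
  set A := ∫ x in a..b, f x
  have hexpand : ∫ x in a..b, ((b - a) * f x - A) ^ 2
      = (b - a) * ((b - a) * ∫ x in a..b, f x ^ 2) - (b - a) * A ^ 2 := by
    have hsq : ∀ x,
        ((b - a) * f x - A) ^ 2 = (b - a) ^ 2 * f x ^ 2 - 2 * (b - a) * A * f x + A ^ 2 :=
      fun x => by ring
    simp_rw [hsq]
    rw [integral_add ((hf2.const_mul _).sub (hf.const_mul _)) intervalIntegrable_const,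
      integral_sub (hf2.const_mul _) (hf.const_mul _), intervalIntegral.integral_const_mul,
      intervalIntegral.integral_const_mul, intervalIntegral.integral_const, smul_eq_mul]
    simp only [A]
    ring
  have hnonneg : 0 ≤ ∫ x in a..b, ((b - a) * f x - A) ^ 2 :=
    integral_nonneg hab fun x _ => sq_nonneg _
  rw [hexpand, ← mul_sub, mul_nonneg_iff_of_pos_left (sub_pos.2 hlt)] at hnonneg
  linarith

theorem hasDerivAt_exp_neg_I_mul_mul {θ : ℝ → ℝ} {q : ℝ → ℂ} {c : ℝ} {m : ℂ} {z : ℝ}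
    (hθ : HasDerivAt θ c z) (hq : HasDerivAt q (I * c * q z + m) z) :
    HasDerivAt (fun w => exp (-(I * θ w)) * q w) (exp (-(I * θ z)) * m) z := by
  have hphase : HasDerivAt (fun w => exp (-(I * θ w))) (exp (-(I * θ z)) * -(I * c)) z :=
    ((hθ.ofReal_comp.const_mul I).neg).cexp
  refine (hphase.mul hq).congr_deriv ?_
  ring

theorem abs_norm_sub_norm_le_integral_norm {g : ℝ → ℝ} {q n : ℝ → ℂ} {a b : ℝ} (hab : a ≤ b)
    (hg : ContinuousOn g (Icc a b)) (hq : ContinuousOn q (Icc a b))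
    (hn : IntervalIntegrable n volume a b)
    (hderiv : ∀ z ∈ Ioo a b, HasDerivAt q (I * g z * q z + n z) z) :
    |‖q b‖ - ‖q a‖| ≤ ∫ z in a..b, ‖n z‖ := by
  set θ : ℝ → ℝ := fun z => ∫ t in a..z, g t
  set u : ℝ → ℂ := fun z => exp (-(I * θ z))
  have hu_norm : ∀ z, ‖u z‖ = 1 := fun z => by simp [u, norm_exp]
  have hθ_cont : ContinuousOn θ (Icc a b) := by
    have := continuousOn_primitive_interval (μ := volume) (a := a) (b := b) (f := g)
      (by rw [uIcc_of_le hab]; exact hg.integrableOn_Icc)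
    rwa [uIcc_of_le hab] at this
  have hu_cont : ContinuousOn u (Icc a b) := by fun_prop
  have hθ_deriv : ∀ z ∈ Ioo a b, HasDerivAt θ (g z) z := fun z hz =>
    integral_hasDerivAt_right
      ((hg.mono (Icc_subset_Icc le_rfl hz.2.le)).intervalIntegrable_of_Icc hz.1.le)
      ((hg.mono Ioo_subset_Icc_self).stronglyMeasurableAtFilter isOpen_Ioo z hz)
      (hg.continuousAt (Icc_mem_nhds hz.1 hz.2))
  have hduhamel : ∫ z in a..b, u z * n z = u b * q b - u a * q a :=
    integral_eq_sub_of_hasDerivAt_of_le hab (hu_cont.mul hq)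
      (fun z hz => hasDerivAt_exp_neg_I_mul_mul (hθ_deriv z hz) (hderiv z hz))
      (hn.continuousOn_mul (by rwa [uIcc_of_le hab]))
  calc |‖q b‖ - ‖q a‖| = |‖u b * q b‖ - ‖u a * q a‖| := by
        simp only [norm_mul, hu_norm, one_mul]
    _ ≤ ‖u b * q b - u a * q a‖ := abs_norm_sub_norm_le _ _
    _ = ‖∫ z in a..b, u z * n z‖ := by rw [hduhamel]
    _ ≤ ∫ z in a..b, ‖u z * n z‖ := norm_integral_le_integral_norm hab
    _ = ∫ z in a..b, ‖n z‖ := by simp only [norm_mul, hu_norm, one_mul]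

/-- The energy of any control driving `x` to `y` through the per-sample channel
is at least `(|y| - |x|)² / L`. -/
theorem energy_lower_bound (γ L : ℝ) (hL : 0 < L)
    (n : ℝ → ℂ) (hn : ContinuousOn n (Set.Icc 0 L))
    (q : ℝ → ℂ)
    (hq : ∀ z ∈ Set.Icc (0:ℝ) L,
      HasDerivAt q (Complex.I * (γ:ℂ) * ((‖q z‖:ℂ))^2 * q z + n z) z)
    (x y : ℂ) (hx : q 0 = x) (hy : q L = y) :
    (‖y‖ - ‖x‖)^2 / L ≤ ∫ z in (0:ℝ)..L, ‖n z‖^2 := by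
  subst hx hy
  have hq_cont : ContinuousOn q (Icc 0 L) := fun z hz =>
    (hq z hz).continuousAt.continuousWithinAt
  have hdrift : |‖q L‖ - ‖q 0‖| ≤ ∫ z in (0:ℝ)..L, ‖n z‖ :=
    abs_norm_sub_norm_le_integral_norm (g := fun z => γ * ‖q z‖ ^ 2) hL.le (by fun_prop) hq_cont
      (hn.intervalIntegrable_of_Icc hL.le)
      fun z hz => (hq z (Ioo_subset_Icc_self hz)).congr_deriv (by push_cast; ring)
  have hcs := sq_intervalIntegral_le_mul_integral_sq hL.le
    (hn.norm.intervalIntegrable_of_Icc hL.le) ((hn.norm.pow 2).intervalIntegrable_of_Icc hL.le)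
  rw [div_le_iff₀ hL]
  calc (‖q L‖ - ‖q 0‖) ^ 2 = |‖q L‖ - ‖q 0‖| ^ 2 := (sq_abs _).symm
    _ ≤ (∫ z in (0:ℝ)..L, ‖n z‖) ^ 2 := pow_le_pow_left₀ (abs_nonneg _) hdrift 2
    _ ≤ (∫ z in (0:ℝ)..L, ‖n z‖ ^ 2) * L := by linarith
end

section
/- For any y ∈ ℂ with y ≠ 0, the function q(z) = (yz/L) · exp(iγ|y|²(z³ − L³)/(3L²)) solves q'(z) = iγ|q(z)|²q(z) + n(z) with n(z) = (y/L) · exp(iγ|y|²(z³ − L³)/(3L²)), satisfies q(0) = 0, q(L) = y, and the control energy is ∫₀^L |n(z)|² dz = |y|²/L. -/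
/-! The trajectory has the form `q z = c z e^{i φ z}` with `c = y / L` and a real phase `φ`.
Its modulus is `‖c‖ |z|`, so the cubic phase, with `φ' z = γ ‖c‖² z²`, is exactly the
self-phase rotation `i γ |q|² q` of the channel, and the product rule leaves the control
`n z = c e^{i φ z}` as the remaining term. Since `n` has constant modulus `‖c‖`, its energy
over `[0, L]` is `L ‖c‖² = ‖y‖² / L`. -/

open Complex

theorem hasDerivAt_mul_exp_phase {γ : ℝ} {c : ℂ} {φ : ℝ → ℝ} {z : ℝ}
    (hφ : HasDerivAt φ (γ * ‖c‖ ^ 2 * z ^ 2) z) :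
    HasDerivAt (fun t : ℝ => c * t * exp (φ t * I))
      (I * γ * (‖c * z * exp (φ z * I)‖ : ℂ) ^ 2 * (c * z * exp (φ z * I))
        + c * exp (φ z * I)) z := by
  have hnorm : ‖c * z * exp (φ z * I)‖ = ‖c‖ * |z| := by
    rw [norm_mul, norm_exp_ofReal_mul_I, mul_one, norm_mul, norm_real, Real.norm_eq_abs]
  have hlin : HasDerivAt (fun t : ℝ => c * t) c z := by
    simpa using (ofRealCLM.hasDerivAt (x := z)).const_mul c
  have hexp := (hφ.ofReal_comp.mul_const I).cexp
  refine (hlin.mul hexp).congr_deriv ?_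
  rw [hnorm, ← ofReal_pow, mul_pow, sq_abs]
  push_cast
  ring

theorem integral_norm_sq_mul_exp_phase (c : ℂ) (φ : ℝ → ℝ) (a b : ℝ) :
    ∫ z in a..b, ‖c * exp (φ z * I)‖ ^ 2 = (b - a) * ‖c‖ ^ 2 := by
  simp only [norm_mul, norm_exp_ofReal_mul_I, mul_one, intervalIntegral.integral_const,
    smul_eq_mul]

theorem explicit_trajectory_from_origin_general (γ L : ℝ) (hL : 0 < L)
    (y : ℂ)
    (q n : ℝ → ℂ)
    (hqdef : q = fun z : ℝ =>
      (y * (z:ℂ) / (L:ℂ)) *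
        Complex.exp (Complex.I * (γ:ℂ) * ((‖y‖:ℂ))^2 * ((z:ℂ)^3 - (L:ℂ)^3) / (3 * (L:ℂ)^2)))
    (hndef : n = fun z : ℝ =>
      (y / (L:ℂ)) *
        Complex.exp (Complex.I * (γ:ℂ) * ((‖y‖:ℂ))^2 * ((z:ℂ)^3 - (L:ℂ)^3) / (3 * (L:ℂ)^2))) :
    (∀ z ∈ Set.Icc (0:ℝ) L,
        HasDerivAt q (Complex.I * (γ:ℂ) * ((‖q z‖:ℂ))^2 * q z + n z) z) ∧
      q 0 = 0 ∧ q L = y ∧ (∫ z in (0:ℝ)..L, ‖n z‖^2) = ‖y‖^2 / L := by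
  have hL0 : (L : ℂ) ≠ 0 := by exact_mod_cast hL.ne'
  have hnorm_c : ‖y / L‖ = ‖y‖ / L := by
    rw [norm_div, norm_real, Real.norm_eq_abs, abs_of_pos hL]
  set c : ℂ := y / L
  set φ : ℝ → ℝ := fun z => γ * ‖c‖ ^ 2 * (z ^ 3 - L ^ 3) / 3
  have hphase (z : ℝ) :
      I * γ * (‖y‖ : ℂ) ^ 2 * ((z : ℂ) ^ 3 - (L : ℂ) ^ 3) / (3 * (L : ℂ) ^ 2) = φ z * I := by
    simp only [φ, hnorm_c]
    push_cast
    field_simp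
  have hq : q = fun z : ℝ => c * z * exp (φ z * I) := by
    rw [hqdef]; funext z; rw [hphase]; ring
  have hn : n = fun z : ℝ => c * exp (φ z * I) := by
    rw [hndef]; funext z; rw [hphase]
  subst hq hn
  refine ⟨fun z _ => hasDerivAt_mul_exp_phase ?_, by simp, ?_, ?_⟩
  · refine ((((hasDerivAt_pow 3 z).sub_const (L ^ 3)).const_mul (γ * ‖c‖ ^ 2)).div_const
      3).congr_deriv ?_
    ring
  · simp [φ, c, hL0]
  · rw [integral_norm_sq_mul_exp_phase, hnorm_c, sub_zero]
    field_simp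

/-- An explicit minimum-energy trajectory from the origin to `y`:
`q(z) = (yz/L)·exp(iγ|y|²(z³−L³)/(3L²))` solves the per-sample channel ODE with
control `n(z) = (y/L)·exp(iγ|y|²(z³−L³)/(3L²))`, starts at `0`, ends at `y`,
and the control energy is `|y|²/L`. -/
theorem explicit_trajectory_from_origin (γ L : ℝ) (hL : 0 < L)
    (y : ℂ) (hy : y ≠ 0)
    (q n : ℝ → ℂ)
    (hqdef : q = fun z : ℝ =>
      (y * (z:ℂ) / (L:ℂ)) *
        Complex.exp (Complex.I * (γ:ℂ) * ((‖y‖:ℂ))^2 * ((z:ℂ)^3 - (L:ℂ)^3) / (3 * (L:ℂ)^2)))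
    (hndef : n = fun z : ℝ =>
      (y / (L:ℂ)) *
        Complex.exp (Complex.I * (γ:ℂ) * ((‖y‖:ℂ))^2 * ((z:ℂ)^3 - (L:ℂ)^3) / (3 * (L:ℂ)^2))) :
    (∀ z ∈ Set.Icc (0:ℝ) L,
        HasDerivAt q (Complex.I * (γ:ℂ) * ((‖q z‖:ℂ))^2 * q z + n z) z) ∧
      q 0 = 0 ∧ q L = y ∧ (∫ z in (0:ℝ)..L, ‖n z‖^2) = ‖y‖^2 / L :=
  explicit_trajectory_from_origin_general γ L hL y q n hqdef hndef
end

section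
/- The adversarial distance from the origin is d(x, 0) = |x|²/(4L) for every x ∈ ℂ. -/
/-- Energy (effort) of a control on `[0, L]`. -/
noncomputable def energy (L : ℝ) (n : ℝ → ℂ) : ℝ := ∫ z in (0:ℝ)..L, ‖n z‖^2

/-- The noise ball `B_E(x)`: outputs reachable from input `x` with effort at most `E`. -/
def noiseBall (γ L : ℝ) (x : ℂ) (E : ℝ) : Set ℂ :=
  {y | ∃ n q : ℝ → ℂ, ContinuousOn n (Set.Icc 0 L) ∧ IsSol γ L n q ∧
    q 0 = x ∧ q L = y ∧ energy L n ≤ E}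

/-- The adversarial distance between two input points. -/
noncomputable def adist (γ L : ℝ) (x₁ x₂ : ℂ) : ℝ :=
  sInf {E | 0 ≤ E ∧ (noiseBall γ L x₁ E ∩ noiseBall γ L x₂ E).Nonempty}

/-!
The nonlinear term `iγ|q|²q` only rotates `q`, so `|q|` changes at rate at most `|n|`, and by
Cauchy–Schwarz an effort `E` moves `|q|` by at most `√(L E)`. A common output of `x` and `0` thus
forces `|x| ≤ 2√(L E)`. Conversely, the controls `n = ∓ (x / 2L) e^{iφ}` shrink `x` and grow `0`
radially at constant speed to a common point of modulus `|x| / 2`, each with effort `|x|² / (4L)`,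
once the phases `φ` are chosen to absorb the rotation.
-/

open Complex Set MeasureTheory

theorem abs_norm_sub_norm_le_integral {E : Type*} [NormedAddCommGroup E] [InnerProductSpace ℝ E]
    {q q' : ℝ → E} {m : ℝ → ℝ} {a b : ℝ} (hab : a ≤ b) (hqc : ContinuousOn q (Icc a b))
    (hq : ∀ t ∈ Ioo a b, HasDerivAt q (q' t) t)
    (hqm : ∀ t ∈ Ioo a b, |inner ℝ (q t) (q' t)| ≤ ‖q t‖ * m t)
    (hm₀ : ∀ t ∈ Ioo a b, 0 ≤ m t) (hm : IntervalIntegrable m volume a b) :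
    |‖q b‖ - ‖q a‖| ≤ ∫ t in a..b, m t := by
  refine le_of_forall_pos_le_add fun ε hε => ?_
  -- `√(‖q‖² + ε²)` is a smooth stand-in for `‖q‖`, which need not be differentiable where `q = 0`.
  set g : ℝ → ℝ := fun t => √(‖q t‖ ^ 2 + ε ^ 2)
  have hg_pos (t : ℝ) : 0 < ‖q t‖ ^ 2 + ε ^ 2 := by positivity
  have hg_deriv (t : ℝ) (ht : t ∈ Ioo a b) :
      HasDerivAt g (inner ℝ (q t) (q' t) / g t) t := by
    convert ((hq t ht).norm_sq.add_const (ε ^ 2)).sqrt (hg_pos t).ne' using 1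
    ring
  have hg_deriv_le (t : ℝ) (ht : t ∈ Ioo a b) : ‖deriv g t‖ ≤ m t := by
    have hq_le : ‖q t‖ ≤ g t := Real.le_sqrt_of_sq_le (by linarith [sq_nonneg ε])
    rw [(hg_deriv t ht).deriv, Real.norm_eq_abs, abs_div, abs_of_pos (Real.sqrt_pos.2 (hg_pos t)),
      div_le_iff₀ (Real.sqrt_pos.2 (hg_pos t))]
    exact (hqm t ht).trans (by nlinarith [hm₀ t ht])
  have hg_close (t : ℝ) : ‖q t‖ ≤ g t ∧ g t ≤ ‖q t‖ + ε :=
    ⟨Real.le_sqrt_of_sq_le (by linarith [sq_nonneg ε]),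
      Real.sqrt_le_iff.2 ⟨by positivity, by nlinarith [norm_nonneg (q t)]⟩⟩
  have hg := norm_sub_le_integral_of_norm_deriv_le_of_le hab
    (by fun_prop) (fun t ht => (hg_deriv t ht).differentiableAt.differentiableWithinAt)
    (ae_of_all _ hg_deriv_le) hm
  rw [Real.norm_eq_abs] at hg
  obtain ⟨hb₁, hb₂⟩ := hg_close b
  obtain ⟨ha₁, ha₂⟩ := hg_close a
  rw [abs_le] at hg ⊢
  constructor <;> linarith

theorem sq_integral_le_mul_integral_sq {f : ℝ → ℝ} {a b : ℝ} (hab : a ≤ b)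
    (hf : IntervalIntegrable f volume a b) (hf₂ : IntervalIntegrable (fun t => f t ^ 2) volume a b) :
    (∫ t in a..b, f t) ^ 2 ≤ (b - a) * ∫ t in a..b, f t ^ 2 := by
  have hquad (c : ℝ) :
      0 ≤ (b - a) * (c * c) + (-2 * ∫ t in a..b, f t) * c + ∫ t in a..b, f t ^ 2 := by
    have hexpand : ∫ t in a..b, (f t - c) ^ 2 =
        (b - a) * (c * c) + (-2 * ∫ t in a..b, f t) * c + ∫ t in a..b, f t ^ 2 := by
      have hlin : IntervalIntegrable (fun t => f t ^ 2 - 2 * c * f t) volume a b :=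
        hf₂.sub (hf.const_mul _)
      calc ∫ t in a..b, (f t - c) ^ 2 = ∫ t in a..b, (f t ^ 2 - 2 * c * f t + c ^ 2) := by
            congr 1; ext t; ring
        _ = _ := by
          rw [intervalIntegral.integral_add hlin intervalIntegrable_const,
            intervalIntegral.integral_sub hf₂ (hf.const_mul _), intervalIntegral.integral_const_mul,
            intervalIntegral.integral_const, smul_eq_mul]
          ring
    exact hexpand ▸ intervalIntegral.integral_nonneg hab fun t _ => sq_nonneg _
  have := discrim_le_zero hquad
  rw [discrim] at this
  linarith

theorem inner_I_mul_ofReal_mul_self (r : ℝ) (w : ℂ) : inner ℝ w (I * r * w) = 0 := by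
  rw [Complex.inner, mul_assoc, mul_conj, mul_assoc, ← ofReal_mul, I_mul_re, ofReal_im, neg_zero]

theorem HasDerivAt.pow_three_sub_const_div {r : ℝ → ℝ} {β z : ℝ} (hr : HasDerivAt r β z)
    (hβ : β ≠ 0) (c : ℝ) : HasDerivAt (fun z => (r z ^ 3 - c) / (3 * β)) (r z ^ 2) z := by
  refine ((hr.pow 3).sub_const c |>.div_const _).congr_deriv ?_
  field_simp
  push_cast
  ring

section

variable {γ L : ℝ}

theorem IsSol.abs_norm_sub_norm_le {n q : ℝ → ℂ} (hq : IsSol γ L n q) (hL : 0 ≤ L)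
    (hn : ContinuousOn n (Icc 0 L)) : |‖q L‖ - ‖q 0‖| ≤ ∫ z in 0..L, ‖n z‖ := by
  refine abs_norm_sub_norm_le_integral hL
    (fun z hz => (hq z hz).continuousAt.continuousWithinAt)
    (fun z hz => hq z (Ioo_subset_Icc_self hz)) (fun z _ => ?_) (fun z _ => norm_nonneg _)
    (hn.norm.intervalIntegrable_of_Icc hL)
  have hrot : I * γ * (‖q z‖ : ℂ) ^ 2 * q z = I * ((γ * ‖q z‖ ^ 2 : ℝ) : ℂ) * q z := by
    push_cast; ring
  rw [hrot, inner_add_right, inner_I_mul_ofReal_mul_self, zero_add]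
  exact abs_real_inner_le_norm _ _

theorem abs_norm_sub_norm_le_sqrt_of_mem_noiseBall {x y : ℂ} {E : ℝ} (hL : 0 ≤ L)
    (hy : y ∈ noiseBall γ L x E) : |‖y‖ - ‖x‖| ≤ √(L * E) := by
  obtain ⟨n, q, hn, hq, rfl, rfl, hE⟩ := hy
  have hn' : ContinuousOn (‖n ·‖) (Icc 0 L) := hn.norm
  refine Real.abs_le_sqrt ?_
  calc (‖q L‖ - ‖q 0‖) ^ 2 ≤ (∫ z in 0..L, ‖n z‖) ^ 2 :=
        sq_le_sq.2 ((hq.abs_norm_sub_norm_le hL hn).trans (le_abs_self _))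
    _ ≤ (L - 0) * energy L n :=
        sq_integral_le_mul_integral_sq hL (hn'.intervalIntegrable_of_Icc hL)
          ((hn'.pow 2).intervalIntegrable_of_Icc hL)
    _ ≤ L * E := by rw [sub_zero]; gcongr

theorem norm_sq_div_le_of_mem_noiseBall_inter {x y : ℂ} {E : ℝ} (hL : 0 < L) (hE : 0 ≤ E)
    (hx : y ∈ noiseBall γ L x E) (h0 : y ∈ noiseBall γ L 0 E) : ‖x‖ ^ 2 / (4 * L) ≤ E := by
  have hx' := abs_norm_sub_norm_le_sqrt_of_mem_noiseBall hL.le hx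
  have h0' := abs_norm_sub_norm_le_sqrt_of_mem_noiseBall hL.le h0
  rw [norm_zero, sub_zero, abs_norm] at h0'
  have hnorm : ‖x‖ ≤ 2 * √(L * E) := by linarith [neg_abs_le (‖y‖ - ‖x‖)]
  rw [div_le_iff₀ (by positivity)]
  calc ‖x‖ ^ 2 ≤ (2 * √(L * E)) ^ 2 := pow_le_pow_left₀ (norm_nonneg x) hnorm 2
    _ = E * (4 * L) := by rw [mul_pow, Real.sq_sqrt (by positivity)]; ring

theorem isSol_polar {x : ℂ} {r φ : ℝ → ℝ} {β : ℝ} (hr : ∀ z ∈ Icc 0 L, HasDerivAt r β z)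
    (hφ : ∀ z ∈ Icc 0 L, HasDerivAt φ (γ * ‖x‖ ^ 2 * r z ^ 2) z) :
    IsSol γ L (fun z => x * β * exp (φ z * I)) (fun z => x * r z * exp (φ z * I)) := by
  intro z hz
  have hnorm : ‖x * r z * exp (φ z * I)‖ ^ 2 = ‖x‖ ^ 2 * r z ^ 2 := by
    rw [norm_mul, norm_mul, norm_exp_ofReal_mul_I, norm_real, Real.norm_eq_abs, mul_one, mul_pow,
      sq_abs]
  have hderiv := (((hr z hz).ofReal_comp.const_mul x).mul
    (((hφ z hz).ofReal_comp.mul_const I).cexp))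
  refine hderiv.congr_deriv ?_
  rw [← ofReal_pow, hnorm]
  push_cast
  ring

theorem energy_mul_exp_ofReal_mul_I (x : ℂ) (β : ℝ) (φ : ℝ → ℝ) :
    energy L (fun z => x * β * exp (φ z * I)) = L * (‖x‖ * β) ^ 2 := by
  simp only [energy, norm_mul, norm_exp_ofReal_mul_I, norm_real, Real.norm_eq_abs, mul_one,
    mul_pow, sq_abs, intervalIntegral.integral_const, smul_eq_mul, sub_zero]

theorem mem_noiseBall_polar {x : ℂ} {r φ : ℝ → ℝ} {β : ℝ} (hr : ∀ z ∈ Icc 0 L, HasDerivAt r β z)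
    (hφ : ∀ z ∈ Icc 0 L, HasDerivAt φ (γ * ‖x‖ ^ 2 * r z ^ 2) z) :
    x * r L * exp (φ L * I) ∈ noiseBall γ L (x * r 0 * exp (φ 0 * I)) (L * (‖x‖ * β) ^ 2) := by
  have hφc : ContinuousOn φ (Icc 0 L) := fun z hz => (hφ z hz).continuousAt.continuousWithinAt
  exact ⟨_, _, by fun_prop, isSol_polar hr hφ, rfl, rfl, (energy_mul_exp_ofReal_mul_I x β φ).le⟩

theorem noiseBall_inter_nonempty (hL : L ≠ 0) (x : ℂ) :
    (noiseBall γ L x (‖x‖ ^ 2 / (4 * L)) ∩ noiseBall γ L 0 (‖x‖ ^ 2 / (4 * L))).Nonempty := by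
  set β : ℝ := 1 / (2 * L)
  have hβ : β ≠ 0 := by positivity
  have hE : L * (‖x‖ * β) ^ 2 = ‖x‖ ^ 2 / (4 * L) := by
    simp only [β]
    field_simp
    ring
  -- Both paths move radially at constant speed `|x| / (2L)` and meet at modulus `|x| / 2`.
  set r₁ : ℝ → ℝ := fun z => 1 - β * z
  set r₂ : ℝ → ℝ := fun z => β * z
  have hr₁ (z : ℝ) : HasDerivAt r₁ (-β) z := by
    simpa using ((hasDerivAt_id z).const_mul β).const_sub 1
  have hr₂ (z : ℝ) : HasDerivAt r₂ β z := by
    simpa using (hasDerivAt_id z).const_mul β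
  set φ₁ : ℝ → ℝ := fun z => γ * ‖x‖ ^ 2 * ((r₁ z ^ 3 - 1) / (3 * -β))
  set φ₂ : ℝ → ℝ := fun z => φ₁ L + γ * ‖x‖ ^ 2 * ((r₂ z ^ 3 - r₂ L ^ 3) / (3 * β))
  have h₁ := mem_noiseBall_polar (γ := γ) (L := L) (x := x) (φ := φ₁) (fun z _ => hr₁ z)
    (fun z _ => ((hr₁ z).pow_three_sub_const_div (neg_ne_zero.2 hβ) _).const_mul _)
  have h₂ := mem_noiseBall_polar (γ := γ) (L := L) (x := x) (φ := φ₂) (fun z _ => hr₂ z)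
    (fun z _ => (((hr₂ z).pow_three_sub_const_div hβ _).const_mul _).const_add _)
  rw [mul_neg, neg_sq, hE] at h₁
  rw [hE] at h₂
  have hr_L : r₂ L = r₁ L := by
    simp only [r₁, r₂, β]
    field_simp
    ring
  have hstart₁ : x * r₁ 0 * exp (φ₁ 0 * I) = x := by simp [r₁, φ₁]
  have hstart₂ : x * r₂ 0 * exp (φ₂ 0 * I) = 0 := by simp [r₂]
  have hend : x * r₂ L * exp (φ₂ L * I) = x * r₁ L * exp (φ₁ L * I) := by simp [φ₂, hr_L]
  rw [hstart₁] at h₁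
  rw [hstart₂, hend] at h₂
  exact ⟨_, h₁, h₂⟩

end

/-- Distance from the origin: `d(x,0) = |x|²/(4L)`. -/
theorem adist_from_origin (γ L : ℝ) (hL : 0 < L) (x : ℂ) :
    adist γ L x 0 = ‖x‖^2 / (4 * L) := by
  refine IsLeast.csInf_eq ⟨⟨by positivity, noiseBall_inter_nonempty hL.ne' x⟩, ?_⟩
  rintro E ⟨hE, y, hx, h0⟩
  exact norm_sq_div_le_of_mem_noiseBall_inter hL hE hx h0
end

section
/- The radial distance satisfies d_R(x₁, x₂) = (|x₁| − |x₂|)² / (4L) for all x₁, x₂ ∈ ℂ. -/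
/-- The radial distance: minimum adversarial distance between the circle of
radius `|x₁|` and the circle of radius `|x₂|`. -/
noncomputable def radialDist (γ L : ℝ) (x₁ x₂ : ℂ) : ℝ :=
  sInf {e | ∃ x y : ℂ, ‖x‖ = ‖x₁‖ ∧ ‖y‖ = ‖x₂‖ ∧ e = adist γ L x y}


/-!
The nonlinearity only rotates the phase: along a solution, `g = e^{-iΦ} q` with `Φ' = γ|q|²`
satisfies `g' = e^{-iΦ} n`, so `|q|` changes by at most `∫ |n| ≤ √(L · energy)` between `z = 0`
and `z = L`. Two inputs of moduli `r₁, r₂` that reach a common output with energy `E` each thus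
satisfy `|r₁ - r₂| ≤ 2√(LE)`. Conversely, the straight radial ramp `|q| = r + (s - r) z / L`,
dressed with the phase solving `θ' = γ|q|²`, is an exact solution of energy `(s - r)² / L`;
running it from both circles to the middle radius `(r₁ + r₂) / 2`, with initial phases chosen so
that both end at the same point, attains the bound.
-/

open Complex Set

section

variable {γ L : ℝ}

lemma isSol_polar_s12 {ρ ρ' θ : ℝ → ℝ} (hρ : ∀ z, HasDerivAt ρ (ρ' z) z)
    (hθ : ∀ z, HasDerivAt θ (γ * ρ z ^ 2) z) :
    IsSol γ L (fun z => ρ' z * exp (θ z * I)) (fun z => ρ z * exp (θ z * I)) := by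
  intro z _
  refine ((hρ z).ofReal_comp.mul ((hθ z).ofReal_comp.mul_const I).cexp).congr_deriv ?_
  rw [norm_mul, norm_exp_ofReal_mul_I, mul_one, norm_real, Real.norm_eq_abs, ← ofReal_pow, sq_abs]
  push_cast
  ring

lemma exists_phase_mem_noiseBall (hL : 0 < L) (a b : ℝ) :
    ∃ Δ : ℝ, ∀ φ : ℝ,
      b * exp ((φ + Δ : ℝ) * I) ∈ noiseBall γ L (a * exp (φ * I)) ((b - a) ^ 2 / L) := by
  set c := (b - a) / L
  have hcL : c * L = b - a := div_mul_cancel₀ _ hL.ne'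
  refine ⟨γ * L * (a * b + (b - a) ^ 2 / 3), fun φ => ?_⟩
  set θ : ℝ → ℝ := fun z => φ + γ * (a ^ 2 * z + a * c * z ^ 2 + c ^ 2 * z ^ 3 / 3)
  have hρ : ∀ z, HasDerivAt (fun z => a + c * z) c z := fun z => by
    simpa using ((hasDerivAt_id z).const_mul c).const_add a
  have hθ : ∀ z, HasDerivAt θ (γ * (a + c * z) ^ 2) z := fun z => by
    refine ((((((hasDerivAt_id z).const_mul (a ^ 2)).add
      ((hasDerivAt_pow 2 z).const_mul (a * c))).add
      (((hasDerivAt_pow 3 z).const_mul (c ^ 2)).div_const 3)).const_mul γ).const_add φ).congr_deriv ?_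
    simp only [Nat.cast_ofNat]
    ring
  refine ⟨_, _, Continuous.continuousOn (by fun_prop), isSol_polar_s12 hρ hθ, ?_, ?_, ?_⟩
  · simp [θ]
  · have hρL : a + c * L = b := by linarith
    have hθL : θ L = φ + γ * L * (a * b + (b - a) ^ 2 / 3) := by
      rw [← hρL]; ring
    simp only [hρL, hθL]
  · have hn : ∀ z, ‖(c : ℂ) * exp (θ z * I)‖ ^ 2 = c ^ 2 := fun z => by
      rw [norm_mul, norm_exp_ofReal_mul_I, mul_one, norm_real, Real.norm_eq_abs, sq_abs]
    simp only [energy, hn, intervalIntegral.integral_const, smul_eq_mul, sub_zero]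
    refine le_of_eq ?_
    rw [← hcL]
    field_simp

lemma noiseBall_mono {x : ℂ} {E E' : ℝ} (h : E ≤ E') : noiseBall γ L x E ⊆ noiseBall γ L x E' :=
  fun _ ⟨n, q, hn, hq, h0, hL, hE⟩ => ⟨n, q, hn, hq, h0, hL, hE.trans h⟩

lemma zero_mem_noiseBall (hL : 0 < L) (x : ℂ) : 0 ∈ noiseBall γ L x (‖x‖ ^ 2 / L) := by
  obtain ⟨Δ, hΔ⟩ := exists_phase_mem_noiseBall (γ := γ) hL ‖x‖ 0
  simpa [norm_mul_exp_arg_mul_I] using hΔ (arg x)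

lemma exists_norm_eq_ofReal_mem_noiseBall (hL : 0 < L) {a : ℝ} (ha : 0 ≤ a) (b : ℝ) :
    ∃ x : ℂ, ‖x‖ = a ∧ (b : ℂ) ∈ noiseBall γ L x ((b - a) ^ 2 / L) := by
  obtain ⟨Δ, hΔ⟩ := exists_phase_mem_noiseBall (γ := γ) hL a b
  refine ⟨a * exp ((-Δ : ℝ) * I), ?_, by simpa using hΔ (-Δ)⟩
  rw [norm_mul, norm_exp_ofReal_mul_I, mul_one, norm_real, Real.norm_of_nonneg ha]

lemma sq_integral_norm_le_mul_energy {n : ℝ → ℂ} (hL : 0 ≤ L)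
    (hn : ContinuousOn n (Icc 0 L)) :
    (∫ z in (0:ℝ)..L, ‖n z‖) ^ 2 ≤ L * energy L n := by
  have h₁ : IntervalIntegrable (fun z => ‖n z‖) MeasureTheory.volume 0 L :=
    hn.norm.intervalIntegrable_of_Icc hL
  have h₂ : IntervalIntegrable (fun z => ‖n z‖ ^ 2) MeasureTheory.volume 0 L :=
    (hn.norm.pow 2).intervalIntegrable_of_Icc hL
  have hquad : ∀ t : ℝ, 0 ≤ L * (t * t) + (-2 * ∫ z in (0:ℝ)..L, ‖n z‖) * t + energy L n := by
    intro t
    have hexpand : ∫ z in (0:ℝ)..L, (‖n z‖ - t) ^ 2 =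
        L * (t * t) + (-2 * ∫ z in (0:ℝ)..L, ‖n z‖) * t + energy L n := by
      have hpt : ∀ z, (‖n z‖ - t) ^ 2 = (‖n z‖ ^ 2 - 2 * t * ‖n z‖) + t * t := fun z => by ring
      simp_rw [hpt]
      rw [intervalIntegral.integral_add (h₂.sub (h₁.const_mul _)) intervalIntegrable_const,
        intervalIntegral.integral_sub h₂ (h₁.const_mul _), intervalIntegral.integral_const_mul,
        intervalIntegral.integral_const, smul_eq_mul, energy]
      ring
    rw [← hexpand]
    exact intervalIntegral.integral_nonneg hL fun _ _ => sq_nonneg _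
  have := discrim_le_zero hquad
  rw [discrim] at this
  linarith

lemma abs_norm_sub_norm_le_integral_s12 {n q : ℝ → ℂ} (hL : 0 ≤ L)
    (hn : ContinuousOn n (Icc 0 L)) (hq : IsSol γ L n q) :
    |‖q L‖ - ‖q 0‖| ≤ ∫ z in (0:ℝ)..L, ‖n z‖ := by
  have hqc : ContinuousOn q (Icc 0 L) := fun z hz => (hq z hz).continuousAt.continuousWithinAt
  -- `q` is arbitrary outside `[0, L]`: the phase integrates its continuous extension `p` instead
  set p : ℝ → ℂ := fun z => q (projIcc 0 L hL z)
  have hp : Continuous p :=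
    hqc.comp_continuous (continuous_subtype_val.comp continuous_projIcc) fun z => (projIcc 0 L hL z).2
  have hpq : ∀ z ∈ Icc 0 L, p z = q z := fun z hz => by simp [p, projIcc_of_mem hL hz]
  set Φ : ℝ → ℝ := fun z => γ * ∫ t in (0:ℝ)..z, ‖p t‖ ^ 2
  set g : ℝ → ℂ := fun z => exp (-(Φ z : ℂ) * I) * q z
  have hΦ : ∀ z, HasDerivAt Φ (γ * ‖p z‖ ^ 2) z := fun z =>
    (((hp.norm.pow 2).integral_hasStrictDerivAt 0 z).hasDerivAt).const_mul γ
  have hg : ∀ z ∈ uIcc 0 L, HasDerivAt g (exp (-(Φ z : ℂ) * I) * n z) z := by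
    intro z hz
    rw [uIcc_of_le hL] at hz
    have hE : HasDerivAt (fun z => exp (-(Φ z : ℂ) * I))
        (exp (-(Φ z : ℂ) * I) * (-((γ * ‖p z‖ ^ 2 : ℝ) : ℂ) * I)) z :=
      ((hΦ z).ofReal_comp.neg.mul_const I).cexp
    refine (hE.mul (hq z hz)).congr_deriv ?_
    rw [hpq z hz]
    push_cast
    ring
  have hg' : IntervalIntegrable (fun z => exp (-(Φ z : ℂ) * I) * n z) MeasureTheory.volume 0 L :=
    ((Continuous.continuousOn (by fun_prop)).mul hn).intervalIntegrable_of_Icc hL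
  have hnorm_g : ∀ z, ‖g z‖ = ‖q z‖ := fun z => by
    simp only [g, norm_mul, ← ofReal_neg, norm_exp_ofReal_mul_I, one_mul]
  calc |‖q L‖ - ‖q 0‖| = |‖g L‖ - ‖g 0‖| := by rw [hnorm_g, hnorm_g]
    _ ≤ ‖g L - g 0‖ := abs_norm_sub_norm_le _ _
    _ = ‖∫ z in (0:ℝ)..L, exp (-(Φ z : ℂ) * I) * n z‖ := by
      rw [intervalIntegral.integral_eq_sub_of_hasDerivAt hg hg']
    _ ≤ ∫ z in (0:ℝ)..L, ‖exp (-(Φ z : ℂ) * I) * n z‖ :=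
      intervalIntegral.norm_integral_le_integral_norm hL
    _ = ∫ z in (0:ℝ)..L, ‖n z‖ := by
      simp only [norm_mul, ← ofReal_neg, norm_exp_ofReal_mul_I, one_mul]

lemma sq_norm_sub_norm_le_of_mem_noiseBall (hL : 0 ≤ L) {x y : ℂ} {E : ℝ}
    (hy : y ∈ noiseBall γ L x E) : (‖y‖ - ‖x‖) ^ 2 ≤ L * E := by
  obtain ⟨n, q, hn, hq, rfl, rfl, hE⟩ := hy
  calc (‖q L‖ - ‖q 0‖) ^ 2 ≤ (∫ z in (0:ℝ)..L, ‖n z‖) ^ 2 := by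
        rw [← sq_abs]
        exact pow_le_pow_left₀ (abs_nonneg _) (abs_norm_sub_norm_le_integral_s12 hL hn hq) 2
    _ ≤ L * energy L n := sq_integral_norm_le_mul_energy hL hn
    _ ≤ L * E := mul_le_mul_of_nonneg_left hE hL

lemma sq_norm_sub_norm_le_of_mem_inter (hL : 0 ≤ L) {x y w : ℂ} {E : ℝ}
    (hw : w ∈ noiseBall γ L x E ∩ noiseBall γ L y E) : (‖x‖ - ‖y‖) ^ 2 ≤ 4 * L * E := by
  have hx := sq_norm_sub_norm_le_of_mem_noiseBall hL hw.1
  have hy := sq_norm_sub_norm_le_of_mem_noiseBall hL hw.2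
  nlinarith [sq_nonneg (‖w‖ - ‖x‖ + (‖w‖ - ‖y‖))]

lemma adist_le_of_mem_inter {x y w : ℂ} {E : ℝ} (hE : 0 ≤ E)
    (hw : w ∈ noiseBall γ L x E ∩ noiseBall γ L y E) : adist γ L x y ≤ E :=
  csInf_le ⟨0, fun _ h => h.1⟩ ⟨hE, w, hw⟩

lemma le_adist (hL : 0 < L) (x y : ℂ) : (‖x‖ - ‖y‖) ^ 2 / (4 * L) ≤ adist γ L x y := by
  have hne : {E | 0 ≤ E ∧ (noiseBall γ L x E ∩ noiseBall γ L y E).Nonempty}.Nonempty :=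
    ⟨max (‖x‖ ^ 2 / L) (‖y‖ ^ 2 / L), by positivity, 0,
      noiseBall_mono (le_max_left _ _) (zero_mem_noiseBall hL x),
      noiseBall_mono (le_max_right _ _) (zero_mem_noiseBall hL y)⟩
  refine le_csInf hne fun E ⟨_, _, hw⟩ => ?_
  rw [div_le_iff₀ (by positivity)]
  linarith [sq_norm_sub_norm_le_of_mem_inter hL.le hw]

end

/-- The radial distance equals `(|x₁| − |x₂|)² / (4L)`. -/
theorem radialDist_eq (γ L : ℝ) (hL : 0 < L) (x₁ x₂ : ℂ) :
    radialDist γ L x₁ x₂ = (‖x₁‖ - ‖x₂‖)^2 / (4 * L) := by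
  set m := (‖x₁‖ + ‖x₂‖) / 2
  obtain ⟨x, hx, hxm⟩ := exists_norm_eq_ofReal_mem_noiseBall (γ := γ) hL (norm_nonneg x₁) m
  obtain ⟨y, hy, hym⟩ := exists_norm_eq_ofReal_mem_noiseBall (γ := γ) hL (norm_nonneg x₂) m
  have hxm' : (m - ‖x₁‖) ^ 2 / L = (‖x₁‖ - ‖x₂‖) ^ 2 / (4 * L) := by field_simp; ring
  have hym' : (m - ‖x₂‖) ^ 2 / L = (‖x₁‖ - ‖x₂‖) ^ 2 / (4 * L) := by field_simp; ring
  have hmid : adist γ L x y ≤ (‖x₁‖ - ‖x₂‖) ^ 2 / (4 * L) :=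
    adist_le_of_mem_inter (by positivity) ⟨hxm' ▸ hxm, hym' ▸ hym⟩
  have hlow : ∀ e ∈ {e | ∃ x y : ℂ, ‖x‖ = ‖x₁‖ ∧ ‖y‖ = ‖x₂‖ ∧ e = adist γ L x y},
      (‖x₁‖ - ‖x₂‖) ^ 2 / (4 * L) ≤ e := by
    rintro _ ⟨x', y', hx', hy', rfl⟩
    simpa only [hx', hy'] using le_adist hL x' y'
  exact le_antisymm ((csInf_le ⟨_, hlow⟩ ⟨x, y, hx, hy, rfl⟩).trans hmid)
    (le_csInf ⟨_, x, y, hx, hy, rfl⟩ hlow)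
end
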